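/- Fix δ > 0, and for each integer N ≥ 1 define f_N : [−2, ∞) → ℝ by f_N(x) = e^{N/2} N^{−(N+1)(1+δ/2)} (x+2)^{N+1} exp(−(x−1)²/(2N^{1+δ})). Then there exists a constant C > 0 such that for every N ≥ 1 and every x ≥ −2, f_N(x) ≤ C; that is, the maxima of the functions f_N form a bounded sequence. -/

import Mathlib

open Real

/-!
With `t = x + 2` and `σ = N ^ (1 + δ)`, taking logarithms gives
`log f_N(x) = N/2 - (N+1)(1+δ/2) log N + (N+1) log t - (t-3)²/(2σ)`.
Bounding `log t` by its tangent line at `√((N+1)σ)` and completing the square in `t`, the last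
two terms are at most `((N+1)/2) log((N+1)σ) - (N+1)/2 + 3√((N+1)/σ)`. The powers of `N` then
cancel exactly, leaving `-1/2 + ((N+1)/2) log((N+1)/N) + 3√((N+1)/σ) ≤ -1/2 + 1 + 9/2 = 5`.
-/

/-- The function `f_N(x) = e^{N/2} N^{-(N+1)(1+δ/2)} (x+2)^{N+1} e^{-(x-1)²/(2N^{1+δ})}`. -/
noncomputable def fN (δ : ℝ) (N : ℕ) (x : ℝ) : ℝ :=
  Real.exp (N / 2) * (N : ℝ) ^ (-(((N : ℝ) + 1) * (1 + δ / 2))) * (x + 2) ^ (N + 1) *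
    Real.exp (-((x - 1) ^ 2 / (2 * (N : ℝ) ^ ((1 : ℝ) + δ))))

/-- Tangent line of `log` at `M / a`, then completing the square in `t`. -/
lemma mul_log_sub_sq_div_le {M σ a t : ℝ} (c : ℝ) (hM : 0 < M) (hσ : 0 < σ) (ha : 0 < a)
    (ht : 0 < t) :
    M * log t - (t - c) ^ 2 / (2 * σ) ≤ M * log (M / a) - M + a * c + a ^ 2 * σ / 2 := by
  have htangent : M * log t ≤ M * log (M / a) + a * t - M := by
    have h := log_le_sub_one_of_pos (show 0 < a * t / M by positivity)
    rw [show a * t / M = t / (M / a) by field_simp,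
      log_div ht.ne' (by positivity)] at h
    have h' := mul_le_mul_of_nonneg_left h hM.le
    rw [show M * (t / (M / a) - 1) = a * t - M by field_simp] at h'
    linarith
  have hsquare : a * t - (t - c) ^ 2 / (2 * σ) ≤ a * c + a ^ 2 * σ / 2 := by
    rw [sub_le_iff_le_add, ← sub_le_iff_le_add', le_div_iff₀ (by positivity)]
    nlinarith [sq_nonneg (t - c - a * σ)]
  linarith

lemma mul_log_sub_sq_div_le_sqrt {M σ t : ℝ} (c : ℝ) (hM : 0 < M) (hσ : 0 < σ) (ht : 0 < t) :
    M * log t - (t - c) ^ 2 / (2 * σ) ≤ M / 2 * log (M * σ) - M / 2 + c * √(M / σ) := by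
  have ha : 0 < √(M / σ) := sqrt_pos.mpr (by positivity)
  have hsq : √(M / σ) ^ 2 = M / σ := sq_sqrt (by positivity)
  have hlog : log (M / √(M / σ)) = log (M * σ) / 2 := by
    rw [log_div hM.ne' ha.ne', log_sqrt (by positivity), log_div hM.ne' hσ.ne',
      log_mul hM.ne' hσ.ne']
    ring
  have h := mul_log_sub_sq_div_le c hM hσ ha ht
  rw [hlog, hsq, div_mul_cancel₀ M hσ.ne'] at h
  linarith

lemma succ_mul_log_succ_div_le {n : ℝ} (hn : 1 ≤ n) : (n + 1) * log ((n + 1) / n) ≤ 2 := by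
  have hn0 : 0 < n := by linarith
  calc (n + 1) * log ((n + 1) / n) ≤ (n + 1) * ((n + 1) / n - 1) :=
        mul_le_mul_of_nonneg_left (log_le_sub_one_of_pos (by positivity)) (by positivity)
    _ = 1 + 1 / n := by field_simp; ring
    _ ≤ 2 := by linarith [(div_le_one hn0).mpr hn]

lemma fN_pos (δ : ℝ) {N : ℕ} (hN : 1 ≤ N) {x : ℝ} (hx : -2 < x) : 0 < fN δ N x := by
  have hN0 : (0 : ℝ) < N := by exact_mod_cast hN
  have ht : 0 < x + 2 := by linarith
  unfold fN
  positivity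

lemma log_fN {δ : ℝ} {N : ℕ} {x : ℝ} (hN : 1 ≤ N) (hx : -2 < x) :
    log (fN δ N x) = N / 2 - (N + 1) * (1 + δ / 2) * log N + (N + 1) * log (x + 2)
      - (x + 2 - 3) ^ 2 / (2 * (N : ℝ) ^ ((1 : ℝ) + δ)) := by
  have hN0 : (0 : ℝ) < N := by exact_mod_cast hN
  have ht : 0 < x + 2 := by linarith
  unfold fN
  rw [log_mul (by positivity) (exp_ne_zero _), log_mul (by positivity) (by positivity),
    log_mul (exp_ne_zero _) (by positivity), log_exp, log_exp, log_pow, log_rpow hN0]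
  push_cast
  ring

lemma log_fN_le {δ : ℝ} (hδ : 0 ≤ δ) {N : ℕ} (hN : 1 ≤ N) {x : ℝ} (hx : -2 < x) :
    log (fN δ N x) ≤ 5 := by
  have hn : (1 : ℝ) ≤ N := by exact_mod_cast hN
  have hn0 : (0 : ℝ) < N := by linarith
  set n : ℝ := (N : ℝ)
  set σ := n ^ ((1 : ℝ) + δ)
  have hσ : n ≤ σ := self_le_rpow_of_one_le hn (by linarith)
  have hgauss := mul_log_sub_sq_div_le_sqrt 3 (by positivity : 0 < n + 1)
    (by positivity : 0 < σ) (by linarith : 0 < x + 2)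
  have hlogσ : log σ = (1 + δ) * log n := log_rpow hn0 _
  rw [log_mul (by positivity) (by positivity), hlogσ] at hgauss
  have hratio := succ_mul_log_succ_div_le hn
  rw [log_div (by positivity) hn0.ne'] at hratio
  have hsqrt : √((n + 1) / σ) ≤ 3 / 2 := by
    rw [sqrt_le_left (by norm_num), div_le_iff₀ (by positivity)]
    linarith
  rw [log_fN hN hx]
  linarith

/-- The functions `f_N` are uniformly bounded on `[-2, ∞)`: their maxima form a bounded
sequence. -/
theorem stmt_13 (δ : ℝ) (hδ : 0 < δ) :
    ∃ C : ℝ, 0 < C ∧ ∀ N : ℕ, 1 ≤ N → ∀ x : ℝ, -2 ≤ x → fN δ N x ≤ C := by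
  refine ⟨exp 5, exp_pos 5, fun N hN x hx => ?_⟩
  rcases hx.eq_or_lt with rfl | hx
  · simpa [fN] using (exp_pos 5).le
  · exact (log_le_iff_le_exp (fN_pos δ hN hx)).mp (log_fN_le hδ.le hN hx)
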